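/- arXiv:2107.02683 — 5 statements merged into one kernel-verified Lean document; each statement's English description precedes it below -/
import Mathlib

section
/- For every positive integer b, let b* denote the minimal number of vertices that a simple graph with b edges can have, i.e. b* is the least integer v with b ≤ v(v−1)/2. Then for all integers s ≥ t ≥ 1, one has s* + t* ≥ (s+t−1)* + 2. -/
/-- `bstar b` is the minimal number of vertices a simple graph with `b` edges can have,
i.e. the least `v` with `b ≤ v*(v-1)/2`. -/
noncomputable def bstar (b : ℕ) : ℕ := sInf {v : ℕ | b ≤ v * (v - 1) / 2}

lemma bstar_mem (b : ℕ) : b ≤ bstar b * (bstar b - 1) / 2 := by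
  have hne : {v : ℕ | b ≤ v * (v - 1) / 2}.Nonempty := by
    refine ⟨2 * b, ?_⟩
    simp only [Set.mem_setOf_eq]
    rcases Nat.eq_zero_or_pos b with h | h
    · omega
    · have h2 : 2 * b * (2 * b - 1) / 2 = b * (2 * b - 1) := by
        rw [Nat.mul_assoc, Nat.mul_div_cancel_left _ (by norm_num)]
      rw [h2]
      have h3 : 1 ≤ 2 * b - 1 := by omega
      nlinarith
  exact Nat.sInf_mem hne

theorem stmt0 (s t : ℕ) (ht : 1 ≤ t) (hts : t ≤ s) :
    bstar s + bstar t ≥ bstar (s + t - 1) + 2 := by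
  have hu := bstar_mem s
  have hw := bstar_mem t
  have hu2 : 2 ≤ bstar s := by
    by_contra h
    have h0 : bstar s * (bstar s - 1) = 0 := by
      rcases (by omega : bstar s = 0 ∨ bstar s = 1) with h1 | h1 <;> simp [h1]
    omega
  have hw2 : 2 ≤ bstar t := by
    by_contra h
    have h0 : bstar t * (bstar t - 1) = 0 := by
      rcases (by omega : bstar t = 0 ∨ bstar t = 1) with h1 | h1 <;> simp [h1]
    omega
  obtain ⟨a, ha⟩ : ∃ a, bstar s = a + 2 := ⟨bstar s - 2, by omega⟩
  obtain ⟨c, hc⟩ : ∃ c, bstar t = c + 2 := ⟨bstar t - 2, by omega⟩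
  rw [ha] at hu
  rw [hc] at hw
  rw [(by omega : a + 2 - 1 = a + 1)] at hu
  rw [(by omega : c + 2 - 1 = c + 1)] at hw
  have h2s : 2 * s ≤ (a + 2) * (a + 1) := by
    have h3 := Nat.mul_le_mul_right 2 hu
    have h4 := Nat.div_mul_le_self ((a + 2) * (a + 1)) 2
    omega
  have h2t : 2 * t ≤ (c + 2) * (c + 1) := by
    have h3 := Nat.mul_le_mul_right 2 hw
    have h4 := Nat.div_mul_le_self ((c + 2) * (c + 1)) 2
    omega
  have key : s + t - 1 ≤ (a + c + 2) * ((a + c + 2) - 1) / 2 := by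
    rw [Nat.le_div_iff_mul_le (by norm_num), (by omega : a + c + 2 - 1 = a + c + 1)]
    have h5 : (s + t - 1) * 2 + 2 = 2 * s + 2 * t := by omega
    nlinarith [Nat.zero_le (a * c)]
  have hle : bstar (s + t - 1) ≤ a + c + 2 := Nat.sInf_le key
  omega
end

section
/- For all integers k ≥ 3 and r ≥ 2 and any sequence b₁, …, b_r of positive integers summing to κ = k(k−1)/2, one has b₁* + ⋯ + b_r* ≥ (κ − (r−1))* + 2(r−1), where b* = min { v : b ≤ v(v−1)/2 }. -/
lemma bstar_set_nonempty (b : ℕ) : {v : ℕ | b ≤ v * (v - 1) / 2}.Nonempty := by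
  refine ⟨2 * b + 1, ?_⟩
  simp only [Set.mem_setOf_eq]
  rw [Nat.le_div_iff_mul_le (by norm_num), Nat.add_sub_cancel]
  nlinarith [Nat.zero_le b]

lemma bstar_le {b v : ℕ} (h : b ≤ v * (v - 1) / 2) : bstar b ≤ v :=
  Nat.sInf_le h

lemma two_le_bstar {b : ℕ} (hb : 1 ≤ b) : 2 ≤ bstar b := by
  by_contra h
  push_neg at h
  have hm := bstar_mem b
  interval_cases hv : (bstar b) <;> simp_all

lemma bstar_add {a c : ℕ} (ha : 1 ≤ a) (hc : 1 ≤ c) :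
    bstar (a + c - 1) + 2 ≤ bstar a + bstar c := by
  have hu := two_le_bstar ha
  have hw := two_le_bstar hc
  have h1 := bstar_mem a
  have h2 := bstar_mem c
  obtain ⟨u, hue⟩ : ∃ u, bstar a = u + 2 := ⟨bstar a - 2, by omega⟩
  obtain ⟨w, hwe⟩ : ∃ w, bstar c = w + 2 := ⟨bstar c - 2, by omega⟩
  rw [hue] at h1 ⊢
  rw [hwe] at h2 ⊢
  simp only [Nat.succ_sub_one] at h1 h2
  have h1' : 2 * a ≤ (u + 2) * (u + 1) := by
    have := Nat.div_mul_le_self ((u + 2) * (u + 1)) 2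
    omega
  have h2' : 2 * c ≤ (w + 2) * (w + 1) := by
    have := Nat.div_mul_le_self ((w + 2) * (w + 1)) 2
    omega
  have key : bstar (a + c - 1) ≤ u + w + 2 := by
    apply bstar_le
    rw [Nat.le_div_iff_mul_le (by norm_num), Nat.succ_sub_one]
    obtain ⟨a', rfl⟩ : ∃ a', a = a' + 1 := ⟨a - 1, by omega⟩
    obtain ⟨c', rfl⟩ : ∃ c', c = c' + 1 := ⟨c - 1, by omega⟩
    have e : a' + 1 + (c' + 1) - 1 = a' + c' + 1 := by omega
    rw [e]
    nlinarith
  omega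

lemma main_lemma : ∀ r : ℕ, ∀ b : Fin (r + 1) → ℕ, (∀ i, 1 ≤ b i) →
    bstar (∑ i, b i - r) + 2 * r ≤ ∑ i, bstar (b i) := by
  intro r
  induction r with
  | zero => intro b hb; simp
  | succ n ih =>
    intro b hb
    rw [Fin.sum_univ_castSucc (f := b), Fin.sum_univ_castSucc (f := fun i => bstar (b i))]
    have h1 := ih (fun i => b i.castSucc) (fun i => hb _)
    have hsum : (n + 1 : ℕ) ≤ ∑ i : Fin (n + 1), b i.castSucc := by
      calc (n + 1 : ℕ) = ∑ _i : Fin (n + 1), 1 := by simp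
        _ ≤ _ := Finset.sum_le_sum (fun i _ => hb _)
    have hlast := hb (Fin.last (n + 1))
    have h2 := bstar_add (a := ∑ i : Fin (n + 1), b i.castSucc - n)
      (c := b (Fin.last (n + 1))) (by omega) hlast
    have heq : (∑ i : Fin (n + 1), b i.castSucc - n) + b (Fin.last (n + 1)) - 1
        = ∑ i : Fin (n + 1), b i.castSucc + b (Fin.last (n + 1)) - (n + 1) := by
      omega
    rw [heq] at h2
    linarith

theorem stmt2 (k r : ℕ) (hk : 3 ≤ k) (hr : 2 ≤ r)
    (b : Fin r → ℕ) (hb : ∀ i, 1 ≤ b i)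
    (hsum : ∑ i, b i = k * (k - 1) / 2) :
    ∑ i, bstar (b i) ≥ bstar (k * (k - 1) / 2 - (r - 1)) + 2 * (r - 1) := by
  obtain ⟨n, rfl⟩ : ∃ n, r = n + 1 := ⟨r - 1, by omega⟩
  rw [← hsum]
  simpa using main_lemma n b hb
end

section
/- Let F be a 2-connected simple graph on v_F ≥ 3 vertices with edge set E_F, and let B₁, …, B_r (r ≥ 2) be a partition of E_F into nonempty sets. For each i, let V_i be the set of vertices incident to some edge of B_i, let v_i = |V_i|, and let ρ_i be the number of connected components of the graph (V_i, B_i). Then v₁ + ⋯ + v_r ≥ v_F + ρ₁ + ⋯ + ρ_r. -/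
open SimpleGraph

lemma aux_delete {V : Type*} {G : SimpleGraph V} {u v : V}
    (hc : G.Connected) (hr : (G \ fromEdgeSet {s(u,v)}).Reachable u v) :
    (G \ fromEdgeSet {s(u,v)}).Connected := by
  rw [connected_iff]
  refine ⟨fun a b => ?_, hc.nonempty⟩
  obtain ⟨w⟩ := hc.preconnected a b
  induction w with
  | nil => exact Reachable.refl _
  | @cons x y z h p ih =>
    refine Reachable.trans ?_ ih
    by_cases he : s(x, y) = s(u, v)
    · rw [Sym2.eq_iff] at he
      rcases he with ⟨rfl, rfl⟩ | ⟨rfl, rfl⟩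
      · exact hr
      · exact hr.symm
    · refine Adj.reachable ?_
      simp only [sdiff_adj, fromEdgeSet_adj]
      exact ⟨h, fun hh => he hh.1⟩

lemma aux_card {V : Type*} [Fintype V] (n : ℕ) :
    ∀ (G : SimpleGraph V), G.Connected → G.edgeSet.ncard ≤ n →
      Fintype.card V ≤ n + 1 := by
  classical
  induction n with
  | zero =>
    intro G hc h0
    have hempty : G.edgeSet = ∅ := by
      have : G.edgeSet.Finite := G.edgeSet.toFinite
      rw [Nat.le_zero, Set.ncard_eq_zero this] at h0
      exact h0
    have : ∀ a b : V, a = b := by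
      intro a b
      obtain ⟨w⟩ := hc.preconnected a b
      cases w with
      | nil => rfl
      | cons h p =>
        exact absurd (G.mem_edgeSet.2 h) (by simp [hempty])
    exact Fintype.card_le_one_iff.2 this
  | succ n ih =>
    intro G hc h
    by_cases hac : G.IsAcyclic
    · have ht : G.IsTree := ⟨hc, hac⟩
      have := ht.card_edgeFinset
      have hcard : G.edgeFinset.card = G.edgeSet.ncard := by
        rw [Set.ncard_eq_toFinset_card']
        exact congrArg Finset.card (by ext e; simp)
      omega
    · rw [isAcyclic_iff_forall_edge_isBridge] at hac
      push_neg at hac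
      obtain ⟨e, he, hnb⟩ := hac
      induction e with
      | _ x y =>
        rw [isBridge_iff] at hnb
        push_neg at hnb
        have hadj : G.Adj x y := G.mem_edgeSet.1 he
        have hreach : (G \ fromEdgeSet {s(x,y)}).Reachable x y := hnb
        have hconn' := aux_delete hc hreach
        have hE : (G \ fromEdgeSet {s(x,y)}).edgeSet = G.edgeSet \ {s(x,y)} := by
          rw [edgeSet_sdiff, edgeSet_fromEdgeSet]
          ext f
          simp only [Set.mem_diff, Set.mem_singleton_iff, Set.mem_setOf_eq]
          constructor
          · rintro ⟨hf, hf2⟩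
            refine ⟨hf, fun hh => hf2 ⟨hh, fun hd => ?_⟩⟩
            subst hh
            rw [Sym2.mem_diagSet, Sym2.isDiag_iff_proj_eq] at hd
            exact hadj.ne hd
          · rintro ⟨hf, hf2⟩
            exact ⟨hf, fun hh => hf2 hh.1⟩
        have hlt : (G \ fromEdgeSet {s(x,y)}).edgeSet.ncard ≤ n := by
          rw [hE, Set.ncard_diff_singleton_of_mem he]
          omega
        have := ih _ hconn' hlt
        omega

lemma aux_sigma {ι : Type*} [Fintype ι] (f : ι → Type*) [∀ i, Finite (f i)] :
    Nat.card (Σ i, f i) = ∑ i, Nat.card (f i) := by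
  letI : ∀ i, Fintype (f i) := fun i => Fintype.ofFinite _
  simp [Nat.card_eq_fintype_card, Fintype.card_sigma]

lemma aux_const {V α : Type*} {G : SimpleGraph V} (f : V → α)
    (h : ∀ a b, G.Adj a b → f a = f b) {a b : V} (hr : G.Reachable a b) :
    f a = f b := by
  obtain ⟨w⟩ := hr
  induction w with
  | nil => rfl
  | @cons x y z h' p ih => exact (h x y h').trans ih

section AuxDefs

variable {V : Type*} {r : ℕ} (B : Fin r → Finset (Sym2 V))

abbrev SAux (i : Fin r) : Set V := {v : V | ∃ e ∈ B i, v ∈ e}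

abbrev GAux (i : Fin r) : SimpleGraph (SAux B i) :=
  (SimpleGraph.fromEdgeSet (↑(B i) : Set (Sym2 V))).induce {v : V | ∃ e ∈ B i, v ∈ e}

abbrev CompAux := Σ i : Fin r, (GAux B i).ConnectedComponent

def RAux : (V ⊕ CompAux B) → (V ⊕ CompAux B) → Prop
  | Sum.inl v, Sum.inr ⟨i, c⟩ =>
      ∃ h : v ∈ SAux B i, (GAux B i).connectedComponentMk ⟨v, h⟩ = c
  | _, _ => False

abbrev HAux : SimpleGraph (V ⊕ CompAux B) := SimpleGraph.fromRel (RAux B)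

def phiAux : (Σ i : Fin r, SAux B i) → Sym2 (V ⊕ CompAux B) :=
  fun p => s(Sum.inl (p.2 : V), Sum.inr ⟨p.1, (GAux B p.1).connectedComponentMk p.2⟩)

lemma phiAux_inj : Function.Injective (phiAux B) := by
  rintro ⟨i, v⟩ ⟨j, w⟩ h
  simp only [phiAux, Sym2.eq_iff] at h
  rcases h with ⟨h1, h2⟩ | ⟨h1, h2⟩
  · have hij : i = j := congrArg Sigma.fst (Sum.inr.inj h2)
    subst hij
    have : v = w := Subtype.ext (Sum.inl.inj h1)
    subst this
    rfl
  · exact absurd h1 (by simp)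

lemma phiAux_range : Set.range (phiAux B) = (HAux B).edgeSet := by
  ext e
  refine Sym2.ind (fun x y => ?_) e
  simp only [Set.mem_range, SimpleGraph.mem_edgeSet, SimpleGraph.fromRel_adj]
  constructor
  · rintro ⟨⟨i, v⟩, h⟩
    simp only [phiAux, Sym2.eq_iff] at h
    rcases h with ⟨h1, h2⟩ | ⟨h1, h2⟩
    · subst h1; subst h2
      exact ⟨by simp, Or.inl ⟨v.2, rfl⟩⟩
    · subst h1; subst h2
      exact ⟨by simp, Or.inr ⟨v.2, rfl⟩⟩
  · rintro ⟨hne, h | h⟩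
    · match x, y, h with
      | Sum.inl v, Sum.inr ⟨i, c⟩, ⟨hv, hc⟩ =>
        exact ⟨⟨i, ⟨v, hv⟩⟩, by simp [phiAux, hc]⟩
    · match x, y, h with
      | Sum.inr ⟨i, c⟩, Sum.inl v, ⟨hv, hc⟩ =>
        refine ⟨⟨i, ⟨v, hv⟩⟩, ?_⟩
        simp [phiAux, hc, Sym2.eq_swap]

end AuxDefs

theorem stmt4 {V : Type*} [Fintype V] [DecidableEq V]
    (G : SimpleGraph V) [DecidableRel G.Adj]
    (hcard : 3 ≤ Fintype.card V)
    (hconn : G.Connected)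
    (h2conn : ∀ v : V, (G.induce {w : V | w ≠ v}).Connected)
    (r : ℕ) (hr : 2 ≤ r)
    (B : Fin r → Finset (Sym2 V))
    (hne : ∀ i, (B i).Nonempty)
    (hdisj : ∀ i j, i ≠ j → Disjoint (B i) (B j))
    (hcover : Finset.univ.biUnion B = G.edgeFinset) :
    ∑ i, Nat.card {v : V | ∃ e ∈ B i, v ∈ e} ≥
      Fintype.card V +
        ∑ i, Nat.card ((SimpleGraph.fromEdgeSet (↑(B i) : Set (Sym2 V))).induce
          {v : V | ∃ e ∈ B i, v ∈ e}).ConnectedComponent := by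
  classical
  -- each B i consists of edges of G
  have hBsub : ∀ i : Fin r, (B i : Set (Sym2 V)) ⊆ G.edgeSet := by
    intro i e he
    rw [← mem_edgeFinset, ← hcover]
    exact Finset.mem_biUnion.2 ⟨i, Finset.mem_univ i, he⟩
  have hmemB : ∀ (i : Fin r) (x y : V), s(x, y) ∈ B i → x ∈ SAux B i ∧ y ∈ SAux B i ∧ G.Adj x y := by
    intro i x y hxy
    exact ⟨⟨s(x,y), hxy, by simp⟩, ⟨s(x,y), hxy, by simp⟩, G.mem_edgeSet.1 (hBsub i hxy)⟩
  -- adjacency in GAux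
  have hGadj : ∀ (i : Fin r) (x y : SAux B i), s((x : V), (y : V)) ∈ B i → (x : V) ≠ (y : V) →
      (GAux B i).Adj x y := by
    intro i x y hmem hne'
    simp only [GAux, comap_adj, Function.Embedding.coe_subtype, fromEdgeSet_adj]
    exact ⟨hmem, hne'⟩
  -- every vertex of S i has a GAux-neighbor
  have hnbr : ∀ (i : Fin r) (x : V) (hx : x ∈ SAux B i), ∃ (y : V) (hy : y ∈ SAux B i),
      y ≠ x ∧ (GAux B i).Adj ⟨x, hx⟩ ⟨y, hy⟩ := by
    intro i x hx
    obtain ⟨e, heB, hxe⟩ := hx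
    set y := Sym2.Mem.other' hxe with hy
    have hxy : s(x, y) = e := Sym2.other_spec' hxe
    rw [← hxy] at heB
    have h3 := hmemB i x y heB
    refine ⟨y, h3.2.1, h3.2.2.ne', hGadj i _ _ heB h3.2.2.ne⟩
  -- a vertex lying in two different parts
  have hcross : ∃ (v : V) (i j : Fin r), i ≠ j ∧ v ∈ SAux B i ∧ v ∈ SAux B j := by
    by_contra hcon
    push_neg at hcon
    have hex : ∀ v : V, ∃ i, v ∈ SAux B i := by
      intro v
      have hu : ∃ u, G.Adj v u := by
        obtain ⟨u, hu⟩ : ∃ u : V, u ≠ v := Fintype.exists_ne_of_one_lt_card (by omega) v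
        obtain ⟨w⟩ := hconn.preconnected v u
        cases w with
        | nil => exact absurd rfl hu.symm
        | cons h p => exact ⟨_, h⟩
      obtain ⟨u, hadj⟩ := hu
      have hmem : s(v, u) ∈ Finset.univ.biUnion B := by
        rw [hcover]; exact mem_edgeFinset.2 hadj
      obtain ⟨i, _, hi⟩ := Finset.mem_biUnion.1 hmem
      exact ⟨i, s(v, u), hi, by simp⟩
    choose f hf using hex
    have huniq : ∀ (v : V) (i : Fin r), v ∈ SAux B i → f v = i := by
      intro v i hvi
      by_contra hfi
      exact hcon v (f v) i hfi (hf v) hvi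
    have hconst : ∀ a b, G.Adj a b → f a = f b := by
      intro a b hab
      have hmem : s(a, b) ∈ Finset.univ.biUnion B := by
        rw [hcover]; exact mem_edgeFinset.2 hab
      obtain ⟨i, _, hi⟩ := Finset.mem_biUnion.1 hmem
      obtain ⟨ha, hb, -⟩ := hmemB i a b hi
      rw [huniq a i ha, huniq b i hb]
    have hAB : ∀ a b : V, f a = f b := fun a b => aux_const f hconst (hconn.preconnected a b)
    set i0 : Fin r := ⟨0, by omega⟩
    set i1 : Fin r := ⟨1, by omega⟩
    obtain ⟨e0, he0⟩ := hne i0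
    obtain ⟨e1, he1⟩ := hne i1
    have ha0 : e0.out.1 ∈ SAux B i0 := ⟨e0, he0, Sym2.out_fst_mem e0⟩
    have ha1 : e1.out.1 ∈ SAux B i1 := ⟨e1, he1, Sym2.out_fst_mem e1⟩
    have : i0 = i1 := by
      rw [← huniq _ _ ha0, ← huniq _ _ ha1]
      exact hAB _ _
    simp [i0, i1, Fin.ext_iff] at this
  obtain ⟨v, i, j, hij, hvi, hvj⟩ := hcross
  set D : Set (V ⊕ CompAux B) := {w | w ≠ Sum.inl v} with hD
  have hDinr : ∀ p : CompAux B, Sum.inr p ∈ D := by intro p; simp [D]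
  have hDinl : ∀ x : V, x ≠ v → Sum.inl x ∈ D := by intro x hx; simp [D, hx]
  -- adjacency between inl x and its component node, within the induced graph on D
  have hadjH : ∀ (x : V) (i' : Fin r) (hx : x ∈ SAux B i'),
      (HAux B).Adj (Sum.inl x) (Sum.inr ⟨i', (GAux B i').connectedComponentMk ⟨x, hx⟩⟩) := by
    intro x i' hx
    rw [SimpleGraph.fromRel_adj]
    exact ⟨by simp, Or.inl ⟨hx, rfl⟩⟩
  -- step A : adjacent vertices of G (both ≠ v) are reachable in the induced graph
  have stepA : ∀ (x y : V) (hx : Sum.inl x ∈ D) (hy : Sum.inl y ∈ D), G.Adj x y →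
      ((HAux B).induce D).Reachable ⟨Sum.inl x, hx⟩ ⟨Sum.inl y, hy⟩ := by
    intro x y hx hy hadj
    have hmem : s(x, y) ∈ Finset.univ.biUnion B := by
      rw [hcover]; exact mem_edgeFinset.2 hadj
    obtain ⟨i', _, hi'⟩ := Finset.mem_biUnion.1 hmem
    obtain ⟨hxS, hyS, -⟩ := hmemB i' x y hi'
    have hcomp : (GAux B i').connectedComponentMk ⟨x, hxS⟩ =
        (GAux B i').connectedComponentMk ⟨y, hyS⟩ :=
      ConnectedComponent.eq.2 (hGadj i' ⟨x, hxS⟩ ⟨y, hyS⟩ hi' hadj.ne).reachable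
    have h1 : ((HAux B).induce D).Adj ⟨Sum.inl x, hx⟩
        ⟨Sum.inr ⟨i', (GAux B i').connectedComponentMk ⟨x, hxS⟩⟩, hDinr _⟩ := by
      simp only [comap_adj, Function.Embedding.coe_subtype]
      exact hadjH x i' hxS
    have h2 : ((HAux B).induce D).Adj ⟨Sum.inl y, hy⟩
        ⟨Sum.inr ⟨i', (GAux B i').connectedComponentMk ⟨x, hxS⟩⟩, hDinr _⟩ := by
      simp only [comap_adj, Function.Embedding.coe_subtype]
      have h2' := hadjH y i' hyS
      rwa [← hcomp] at h2'
    exact h1.reachable.trans h2.reachable.symm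
  -- step B : any two non-v vertices are reachable (via 2-connectivity)
  have stepB : ∀ (x y : V) (hx : Sum.inl x ∈ D) (hy : Sum.inl y ∈ D),
      ((HAux B).induce D).Reachable ⟨Sum.inl x, hx⟩ ⟨Sum.inl y, hy⟩ := by
    have key : ∀ (a b : {w : V | w ≠ v}) (w : (G.induce {w : V | w ≠ v}).Walk a b),
        ((HAux B).induce D).Reachable ⟨Sum.inl (a : V), hDinl _ a.2⟩
          ⟨Sum.inl (b : V), hDinl _ b.2⟩ := by
      intro a b w
      induction w with
      | nil => exact Reachable.refl _
      | @cons p q t h w' ih =>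
        have hpq : G.Adj (p : V) (q : V) := by
          simpa only [comap_adj, Function.Embedding.coe_subtype] using h
        exact (stepA _ _ (hDinl _ p.2) (hDinl _ q.2) hpq).trans ih
    intro x y hx hy
    have hx' : x ≠ v := by simpa [D] using hx
    have hy' : y ≠ v := by simpa [D] using hy
    obtain ⟨w⟩ := (h2conn v).preconnected ⟨x, hx'⟩ ⟨y, hy'⟩
    exact key ⟨x, hx'⟩ ⟨y, hy'⟩ w
  -- a base vertex different from v
  obtain ⟨a0, ha0⟩ : ∃ a : V, a ≠ v := by
    obtain ⟨a, ha⟩ := Fintype.exists_ne_of_one_lt_card (by omega) v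
    exact ⟨a, ha⟩
  -- the induced graph on D is connected
  have hconnH' : ((HAux B).induce D).Connected := by
    rw [connected_iff]
    refine ⟨fun p q => ?_, ⟨⟨Sum.inl a0, hDinl _ ha0⟩⟩⟩
    have hsuff : ∀ p : D, ((HAux B).induce D).Reachable p ⟨Sum.inl a0, hDinl _ ha0⟩ := by
      rintro ⟨p, hp⟩
      match p, hp with
      | Sum.inl x, hp => exact stepB x a0 hp (hDinl _ ha0)
      | Sum.inr ⟨i', c⟩, hp =>
        obtain ⟨⟨x, hxS⟩, hcx⟩ : ∃ a, (GAux B i').connectedComponentMk a = c := c.exists_rep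
        obtain ⟨y, hyS, hyx, hadjC⟩ := hnbr i' x hxS
        have hcy : (GAux B i').connectedComponentMk ⟨y, hyS⟩ = c := by
          rw [← hcx]
          exact (ConnectedComponent.eq.2 hadjC.reachable.symm)
        -- pick z ≠ v in the component c
        obtain ⟨z, hzS, hzv, hcz⟩ : ∃ (z : V) (hz : z ∈ SAux B i'), z ≠ v ∧
            (GAux B i').connectedComponentMk ⟨z, hz⟩ = c := by
          by_cases hxv : x = v
          · exact ⟨y, hyS, by rw [hxv] at hyx; exact hyx, hcy⟩
          · exact ⟨x, hxS, hxv, hcx⟩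
        have h1 : ((HAux B).induce D).Adj ⟨Sum.inl z, hDinl _ hzv⟩ ⟨Sum.inr ⟨i', c⟩, hp⟩ := by
          simp only [comap_adj, Function.Embedding.coe_subtype]
          rw [← hcz]
          exact hadjH z i' hzS
        exact h1.reachable.symm.trans (stepB z a0 (hDinl _ hzv) (hDinl _ ha0))
    exact (hsuff p).trans (hsuff q).symm
  -- counting
  letI : Fintype (CompAux B) := Fintype.ofFinite _
  have hEcount : (HAux B).edgeSet.ncard = ∑ i', Nat.card (SAux B i') := by
    rw [← phiAux_range, ← Set.image_univ, Set.ncard_image_of_injective _ (phiAux_inj B),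
      Set.ncard_univ, Nat.card_eq_fintype_card, Fintype.card_sigma]
    exact Finset.sum_congr rfl fun i' _ => by rw [Nat.card_eq_fintype_card]
  -- the two special edges at v
  have he1 : s(Sum.inl v, Sum.inr ⟨i, (GAux B i).connectedComponentMk ⟨v, hvi⟩⟩)
      ∈ (HAux B).edgeSet := hadjH v i hvi
  have he2 : s(Sum.inl v, Sum.inr ⟨j, (GAux B j).connectedComponentMk ⟨v, hvj⟩⟩)
      ∈ (HAux B).edgeSet := hadjH v j hvj
  have he12 : s(Sum.inl v, (Sum.inr ⟨i, (GAux B i).connectedComponentMk ⟨v, hvi⟩⟩ : V ⊕ CompAux B))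
      ≠ s(Sum.inl v, Sum.inr ⟨j, (GAux B j).connectedComponentMk ⟨v, hvj⟩⟩) := by
    intro h
    rw [Sym2.eq_iff] at h
    rcases h with ⟨-, h2⟩ | ⟨h1, -⟩
    · exact hij (congrArg Sigma.fst (Sum.inr.inj h2))
    · cases h1
  set img : Set (Sym2 (V ⊕ CompAux B)) :=
    Sym2.map (Subtype.val : D → (V ⊕ CompAux B)) '' ((HAux B).induce D).edgeSet with himg_def
  have hmapsub : img ⊆ (HAux B).edgeSet := by
    rintro e ⟨e', he', rfl⟩
    revert he'
    refine Sym2.ind (fun a b => ?_) e'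
    intro hab
    rw [mem_edgeSet] at hab
    simp only [Sym2.map_pair_eq, mem_edgeSet]
    exact (comap_adj.1 hab :)
  have hnotimg : ∀ (e : Sym2 (V ⊕ CompAux B)),
      Sum.inl v ∈ e → e ∈ img → False := by
    rintro e hv ⟨e', he', rfl⟩
    obtain ⟨⟨a, ha⟩, -, haa⟩ := Sym2.mem_map.1 hv
    exact ha haa
  have hcard2 : ((HAux B).induce D).edgeSet.ncard + 2 ≤ (HAux B).edgeSet.ncard := by
    have hins : insert (s(Sum.inl v, Sum.inr ⟨i, (GAux B i).connectedComponentMk ⟨v, hvi⟩⟩))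
        (insert (s(Sum.inl v, Sum.inr ⟨j, (GAux B j).connectedComponentMk ⟨v, hvj⟩⟩)) img)
        ⊆ (HAux B).edgeSet := by
      rw [Set.insert_subset_iff, Set.insert_subset_iff]
      exact ⟨he1, he2, hmapsub⟩
    have h1 : (insert (s(Sum.inl v, Sum.inr ⟨i, (GAux B i).connectedComponentMk ⟨v, hvi⟩⟩))
        (insert (s(Sum.inl v, Sum.inr ⟨j, (GAux B j).connectedComponentMk ⟨v, hvj⟩⟩)) img)).ncard
        = img.ncard + 2 := by
      rw [Set.ncard_insert_of_notMem ?h1 ((Set.toFinite img).insert _),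
        Set.ncard_insert_of_notMem ?h2 (Set.toFinite img)]
      case h1 =>
        intro hmem
        rcases Set.mem_insert_iff.1 hmem with h | h
        · exact he12 h
        · exact hnotimg _ (by simp) h
      case h2 => exact fun h => hnotimg _ (by simp) h
    have himgcard : img.ncard = ((HAux B).induce D).edgeSet.ncard :=
      Set.ncard_image_of_injective _ (Sym2.map.injective Subtype.val_injective)
    have hle := Set.ncard_le_ncard hins (Set.toFinite _)
    omega
  letI : Fintype D := Fintype.ofFinite _
  have hDconn := aux_card (((HAux B).induce D).edgeSet.ncard) _ hconnH' le_rfl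
  have hDcard : (D : Set (V ⊕ CompAux B)).ncard + 1 = Nat.card (V ⊕ CompAux B) := by
    have hDc : D = ({Sum.inl v} : Set (V ⊕ CompAux B))ᶜ := by
      ext w; simp [D]
    rw [hDc]
    have := Set.ncard_add_ncard_compl ({Sum.inl v} : Set (V ⊕ CompAux B))
    rw [Set.ncard_singleton] at this
    omega
  have hDnat : Fintype.card D = (D : Set (V ⊕ CompAux B)).ncard := by
    rw [← Nat.card_coe_set_eq, Nat.card_eq_fintype_card]
  have hWcard : Nat.card (V ⊕ CompAux B)
      = Fintype.card V + ∑ i', Nat.card ((GAux B i').ConnectedComponent) := by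
    rw [Nat.card_sum, Nat.card_eq_fintype_card (α := V), aux_sigma]
  have hgoal1 : ∑ i', Nat.card {v : V | ∃ e ∈ B i', v ∈ e} = ∑ i', Nat.card (SAux B i') := rfl
  have hgoal2 : ∑ i', Nat.card ((SimpleGraph.fromEdgeSet (↑(B i') : Set (Sym2 V))).induce
      {v : V | ∃ e ∈ B i', v ∈ e}).ConnectedComponent
      = ∑ i', Nat.card ((GAux B i').ConnectedComponent) := rfl
  rw [ge_iff_le, hgoal2, hgoal1]
  omega
end

section
/- Let F be a balanced graph with v_F vertices and e_F ≥ 1 edges, meaning e_F/v_F = max over subgraphs H ⊆ F with e_H ≥ 1 of e_H/v_H. For n ≥ 1 and p ∈ (0,1], define Ψ_H(n,p) = n^{v_H} p^{e_H} and Φ_F(n,p) = min over H ⊆ F with e_H ≥ 1 of Ψ_H(n,p). Then Φ_F(n,p) ≥ min( Ψ_F(n,p)^{2/v_F}, Ψ_F(n,p) ). -/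
open Real

theorem stmt6 {V : Type*} [Fintype V] (F : SimpleGraph V)
    (heF : 1 ≤ Nat.card F.edgeSet)
    (hbal : ∀ H : F.Subgraph, 1 ≤ Nat.card H.edgeSet →
      (Nat.card H.edgeSet : ℝ) / (Nat.card H.verts : ℝ) ≤
        (Nat.card F.edgeSet : ℝ) / (Fintype.card V : ℝ))
    (n : ℕ) (hn : 1 ≤ n) (p : ℝ) (hp0 : 0 < p) (hp1 : p ≤ 1) :
    ∀ H : F.Subgraph, 1 ≤ Nat.card H.edgeSet →
      min (((n : ℝ) ^ (Fintype.card V) * p ^ (Nat.card F.edgeSet)) ^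
            ((2 : ℝ) / (Fintype.card V : ℝ)))
          ((n : ℝ) ^ (Fintype.card V) * p ^ (Nat.card F.edgeSet))
        ≤ (n : ℝ) ^ (Nat.card H.verts) * p ^ (Nat.card H.edgeSet) := by
  intro H hH
  set v := Fintype.card V with hv
  set e := Nat.card F.edgeSet with he
  set w := Nat.card H.verts with hw
  set f := Nat.card H.edgeSet with hf
  have hn1 : (1:ℝ) ≤ (n:ℝ) := by exact_mod_cast hn
  have hn0 : (0:ℝ) < (n:ℝ) := lt_of_lt_of_le one_pos hn1
  -- w ≥ 2
  have hw2 : 2 ≤ w := by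
    have hne : Nonempty ↥H.edgeSet := by
      have : 0 < f := hH
      rw [hf, Nat.card_pos_iff] at this
      exact this.1
    obtain ⟨⟨s, hs⟩⟩ := hne
    induction s using Sym2.ind with
    | _ a b =>
      rw [SimpleGraph.Subgraph.mem_edgeSet] at hs
      have hab : a ≠ b := hs.ne
      have ha : a ∈ H.verts := H.edge_vert hs
      have hb : b ∈ H.verts := H.edge_vert hs.symm
      rw [hw, Nat.card_coe_set_eq]
      have : 1 < H.verts.ncard := by
        rw [Set.one_lt_ncard_iff (Set.toFinite _)]
        exact ⟨a, b, ha, hb, hab⟩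
      omega
  have hwv : w ≤ v := by
    rw [hw, hv, ← Nat.card_eq_fintype_card]
    exact Nat.card_le_card_of_injective (Subtype.val : H.verts → V)
      Subtype.val_injective
  have hv0 : 0 < v := by omega
  have hvR : (0:ℝ) < (v:ℝ) := by exact_mod_cast hv0
  have hwR : (0:ℝ) < (w:ℝ) := by positivity
  have hfle : (f:ℝ) ≤ (e:ℝ) * ((w:ℝ)/(v:ℝ)) := by
    have h := hbal H hH
    rw [div_le_div_iff₀ hwR hvR] at h
    rw [mul_div_assoc'] at *
    rw [le_div_iff₀ hvR]
    linarith
  set Ψ : ℝ := (n:ℝ)^v * p^e with hΨ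
  have hΨ0 : 0 < Ψ := by positivity
  have key : Ψ ^ ((w:ℝ)/(v:ℝ)) ≤ (n:ℝ)^w * p^f := by
    have h1 : Ψ ^ ((w:ℝ)/(v:ℝ))
        = (n:ℝ) ^ ((v:ℝ) * ((w:ℝ)/(v:ℝ))) * p ^ ((e:ℝ) * ((w:ℝ)/(v:ℝ))) := by
      rw [hΨ, Real.mul_rpow (by positivity) (by positivity),
        ← Real.rpow_natCast (n:ℝ) v, ← Real.rpow_natCast p e,
        ← Real.rpow_mul (le_of_lt hn0), ← Real.rpow_mul (le_of_lt hp0)]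
    have h2 : (v:ℝ) * ((w:ℝ)/(v:ℝ)) = (w:ℝ) := by field_simp
    rw [h1, h2, Real.rpow_natCast]
    have h3 : p ^ ((e:ℝ) * ((w:ℝ)/(v:ℝ))) ≤ p ^ ((f:ℝ)) :=
      Real.rpow_le_rpow_of_exponent_ge hp0 hp1 hfle
    rw [Real.rpow_natCast] at h3
    exact mul_le_mul_of_nonneg_left h3 (by positivity)
  refine le_trans ?_ key
  rcases le_total 1 Ψ with hc | hc
  · refine le_trans (min_le_left _ _) ?_
    exact Real.rpow_le_rpow_of_exponent_le hc
      (by gcongr; exact_mod_cast hw2)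
  · refine le_trans (min_le_right _ _) ?_
    calc Ψ = Ψ ^ (1:ℝ) := (Real.rpow_one Ψ).symm
    _ ≤ Ψ ^ ((w:ℝ)/(v:ℝ)) := Real.rpow_le_rpow_of_exponent_ge hΨ0 hc
        (by rw [div_le_one hvR]; exact_mod_cast hwv)
end

section
/- Let F be a balanced graph (e_F/v_F maximal among subgraphs with at least one edge) with e_F ≥ 1, and suppose n ≥ 1 and p ∈ (0,1] satisfy p > n^{−v_F/e_F} (equivalently Ψ_F(n,p) > 1). Then for every subgraph H ⊆ F with e_H ≥ 1, Ψ_H(n,p)^{1/(v_H − 1)} ≥ Ψ_H(n,p)^{1/v_H} ≥ Ψ_F(n,p)^{1/v_F}, where Ψ_G(n,p) = n^{v_G} p^{e_G}. -/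
open Real

theorem stmt16 {V : Type*} [Fintype V] (F : SimpleGraph V)
    (heF : 1 ≤ Nat.card F.edgeSet)
    (hbal : ∀ H : F.Subgraph, 1 ≤ Nat.card H.edgeSet →
      (Nat.card H.edgeSet : ℝ) / (Nat.card H.verts : ℝ) ≤
        (Nat.card F.edgeSet : ℝ) / (Fintype.card V : ℝ))
    (n : ℕ) (hn : 1 ≤ n) (p : ℝ) (hp0 : 0 < p) (hp1 : p ≤ 1)
    (hplarge : (n : ℝ) ^ (-(Fintype.card V : ℝ) / (Nat.card F.edgeSet : ℝ)) < p) :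
    ∀ H : F.Subgraph, 1 ≤ Nat.card H.edgeSet →
      ((n : ℝ) ^ (Fintype.card V) * p ^ (Nat.card F.edgeSet)) ^
          ((1 : ℝ) / (Fintype.card V : ℝ))
        ≤ ((n : ℝ) ^ (Nat.card H.verts) * p ^ (Nat.card H.edgeSet)) ^
            ((1 : ℝ) / (Nat.card H.verts : ℝ))
      ∧ ((n : ℝ) ^ (Nat.card H.verts) * p ^ (Nat.card H.edgeSet)) ^
            ((1 : ℝ) / (Nat.card H.verts : ℝ))
        ≤ ((n : ℝ) ^ (Nat.card H.verts) * p ^ (Nat.card H.edgeSet)) ^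
            ((1 : ℝ) / ((Nat.card H.verts : ℝ) - 1)) := by
  intro H hbH
  have hn0 : (0:ℝ) < n := by exact_mod_cast hn
  have hVne : Nonempty V := by
    obtain ⟨⟨s, hs⟩⟩ := (Nat.card_pos_iff.mp heF).1
    induction s using Sym2.ind with
    | _ x y => exact ⟨x⟩
  have hv0 : 0 < Fintype.card V := Fintype.card_pos
  have he0 : (0:ℝ) < Nat.card F.edgeSet := by exact_mod_cast heF
  have hvR : (0:ℝ) < Fintype.card V := by exact_mod_cast hv0
  -- H has at least 2 vertices
  have ha2 : 2 ≤ Nat.card H.verts := by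
    obtain ⟨⟨s, hs⟩⟩ := (Nat.card_pos_iff.mp hbH).1
    induction s using Sym2.ind with
    | _ x y =>
      rw [SimpleGraph.Subgraph.mem_edgeSet] at hs
      rw [Nat.card_coe_set_eq]
      exact (Set.one_lt_ncard_iff (Set.toFinite _)).mpr
        ⟨x, y, H.edge_vert hs, H.edge_vert hs.symm, hs.ne⟩
  have haR : (0:ℝ) < Nat.card H.verts := by
    have : 0 < Nat.card H.verts := by omega
    exact_mod_cast this
  -- the rewriting lemma
  have key : ∀ (m k : ℕ), (0:ℝ) < m →
      ((n:ℝ)^m * p^k) ^ ((1:ℝ)/m) = (n:ℝ) * p ^ ((k:ℝ)/m) := by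
    intro m k hm
    rw [← Real.rpow_natCast (n:ℝ) m, ← Real.rpow_natCast p k,
      Real.mul_rpow (Real.rpow_nonneg hn0.le _) (Real.rpow_nonneg hp0.le _),
      ← Real.rpow_mul hn0.le, ← Real.rpow_mul hp0.le,
      mul_one_div, mul_one_div, div_self hm.ne', Real.rpow_one]
  have keyF := key (Fintype.card V) (Nat.card F.edgeSet) hvR
  have keyH := key (Nat.card H.verts) (Nat.card H.edgeSet) haR
  -- first inequality
  have hba : (Nat.card H.edgeSet : ℝ) / (Nat.card H.verts : ℝ) ≤
      (Nat.card F.edgeSet : ℝ) / (Fintype.card V : ℝ) := hbal H hbH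
  have h1 : ((n : ℝ) ^ (Fintype.card V) * p ^ (Nat.card F.edgeSet)) ^
        ((1 : ℝ) / (Fintype.card V : ℝ))
      ≤ ((n : ℝ) ^ (Nat.card H.verts) * p ^ (Nat.card H.edgeSet)) ^
        ((1 : ℝ) / (Nat.card H.verts : ℝ)) := by
    rw [keyF, keyH]
    exact mul_le_mul_of_nonneg_left
      (Real.rpow_le_rpow_of_exponent_ge hp0 hp1 hba) hn0.le
  refine ⟨h1, ?_⟩
  -- Ψ_F > 1
  have hpe : (n:ℝ) ^ (-(Fintype.card V : ℝ)) < p ^ ((Nat.card F.edgeSet : ℝ)) := by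
    calc (n:ℝ) ^ (-(Fintype.card V : ℝ))
        = ((n:ℝ) ^ (-(Fintype.card V : ℝ) / (Nat.card F.edgeSet : ℝ))) ^
            ((Nat.card F.edgeSet : ℝ)) := by
          rw [← Real.rpow_mul hn0.le, div_mul_cancel₀ _ he0.ne']
      _ < p ^ ((Nat.card F.edgeSet : ℝ)) :=
          Real.rpow_lt_rpow (Real.rpow_nonneg hn0.le _) hplarge he0
  have hΨF : 1 < (n : ℝ) ^ (Fintype.card V) * p ^ (Nat.card F.edgeSet) := by
    have h2 : (1:ℝ) < (n:ℝ) ^ ((Fintype.card V : ℝ)) * p ^ ((Nat.card F.edgeSet : ℝ)) := by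
      have := mul_lt_mul_of_pos_left hpe (Real.rpow_pos_of_pos hn0 ((Fintype.card V : ℝ)))
      rwa [← Real.rpow_add hn0, add_neg_cancel, Real.rpow_zero] at this
    rwa [Real.rpow_natCast, Real.rpow_natCast] at h2
  -- Ψ_H ≥ 1
  have hΨHpos : (0:ℝ) < (n : ℝ) ^ (Nat.card H.verts) * p ^ (Nat.card H.edgeSet) := by
    positivity
  have hΨH1 : 1 ≤ (n : ℝ) ^ (Nat.card H.verts) * p ^ (Nat.card H.edgeSet) := by
    have hF1 : (1:ℝ) ≤ ((n : ℝ) ^ (Fintype.card V) * p ^ (Nat.card F.edgeSet)) ^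
        ((1 : ℝ) / (Fintype.card V : ℝ)) :=
      Real.one_le_rpow hΨF.le (by positivity)
    have := hF1.trans h1
    by_contra hx'
    push_neg at hx'
    exact absurd this (not_le.mpr (Real.rpow_lt_one hΨHpos.le hx' (by positivity)))
  -- exponent comparison
  have hexp : (1 : ℝ) / (Nat.card H.verts : ℝ) ≤ (1 : ℝ) / ((Nat.card H.verts : ℝ) - 1) := by
    have h2R : (2:ℝ) ≤ Nat.card H.verts := by exact_mod_cast ha2
    apply one_div_le_one_div_of_le (by linarith) (by linarith)
  exact Real.rpow_le_rpow_of_exponent_le hΨH1 hexp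
end
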